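/- arXiv:1708.00285 — 3 statements merged into one kernel-verified Lean document; each statement's English description precedes it below -/
import Mathlib

section
/- The function f(x) = Σ_{k=0}^∞ 2^k χ_{A_k}(x) sgn(x) on ℝ, where A_k = {x : 2^k < |x| ≤ 2^k + 1}, satisfies f_{B(0,r)} = 0 for every r > 0 and sup_{r>0} |B(0,r)|^{-1} ∫_{B(0,r)} |f(x) − f_{B(0,r)}| dx < ∞, i.e., f belongs to CBMO^1(ℝ). -/
open MeasureTheory Metric
open Finset
open scoped Pointwise

/-!
Since `sgn` is odd and the series is even, `f` is odd and so has mean zero over every centred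
ball. On `B(0, r)` with `r ≤ 2 ^ K` only the terms `k < K` of the series survive, each shell has
measure at most `2`, hence `∫_{B(0,r)} |f| ≤ 2 ∑_{k < K} 2 ^ k = 2 (2 ^ K - 1)`; choosing `K`
minimal makes this at most `4 r = 2 |B(0, r)|`.
-/

/-- The function `f(x) = Σ_{k=0}^∞ 2^k χ_{A_k}(x) sgn(x)` on `ℝ`,
where `A_k = {x : 2^k < |x| ≤ 2^k + 1}`. -/
noncomputable def paperF : ℝ → ℝ := fun x =>
  Real.sign x *
    ∑' k : ℕ, Set.indicator {y : ℝ | 2 ^ k < |y| ∧ |y| ≤ 2 ^ k + 1}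
      (fun _ => (2 : ℝ) ^ k) x

theorem Function.Even.indicator {α β : Type*} [Neg α] [Zero β] {f : α → β} {s : Set α}
    (hf : f.Even) (hs : -s = s) : (s.indicator f).Even := by
  intro x
  have hmem : -x ∈ s ↔ x ∈ s := by rw [← Set.mem_neg, hs]
  by_cases hx : x ∈ s
  · simp only [Set.indicator_of_mem hx, Set.indicator_of_mem (hmem.2 hx), hf.eq]
  · simp only [Set.indicator_of_notMem hx, Set.indicator_of_notMem (mt hmem.1 hx)]

theorem Function.Odd.indicator {α β : Type*} [Neg α] [NegZeroClass β] {f : α → β} {s : Set α}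
    (hf : f.Odd) (hs : -s = s) : (s.indicator f).Odd := by
  intro x
  have hmem : -x ∈ s ↔ x ∈ s := by rw [← Set.mem_neg, hs]
  by_cases hx : x ∈ s
  · simp only [Set.indicator_of_mem hx, Set.indicator_of_mem (hmem.2 hx), hf.eq]
  · simp only [Set.indicator_of_notMem hx, Set.indicator_of_notMem (mt hmem.1 hx), neg_zero]

section OddIntegral

variable {G E : Type*} [MeasurableSpace G] [AddGroup G] [MeasurableNeg G]
  [NormedAddCommGroup E] [NormedSpace ℝ E] {μ : Measure G} [μ.IsNegInvariant] {f : G → E}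

theorem Function.Odd.integral_eq_zero (hf : f.Odd) : ∫ x, f x ∂μ = 0 := by
  have h : ∫ x, f x ∂μ = -∫ x, f x ∂μ :=
    calc ∫ x, f x ∂μ = ∫ x, f (-x) ∂μ := (integral_neg_eq_self f μ).symm
      _ = -∫ x, f x ∂μ := by simp only [hf.eq, integral_neg]
  have h2 : (2 : ℝ) • ∫ x, f x ∂μ = 0 := by
    rw [two_smul]
    nth_rw 1 [h]
    exact neg_add_cancel _
  exact (smul_eq_zero.mp h2).resolve_left two_ne_zero

theorem Function.Odd.setIntegral_eq_zero {s : Set G} (hf : f.Odd) (hs : MeasurableSet s)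
    (hs_neg : -s = s) : ∫ x in s, f x ∂μ = 0 := by
  rw [← integral_indicator hs]
  exact (hf.indicator hs_neg).integral_eq_zero

end OddIntegral

theorem volume_abs_mem_Ioc_le (a b : ℝ) :
    volume {y : ℝ | a < |y| ∧ |y| ≤ b} ≤ 2 * ENNReal.ofReal (b - a) := by
  have hsub : {y : ℝ | a < |y| ∧ |y| ≤ b} ⊆ Set.Ioc a b ∪ Set.Ico (-b) (-a) := by
    rintro y ⟨hay, hyb⟩
    rcases le_or_gt 0 y with hy | hy
    · rw [abs_of_nonneg hy] at hay hyb
      exact Or.inl ⟨hay, hyb⟩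
    · rw [abs_of_neg hy] at hay hyb
      exact Or.inr ⟨by linarith, by linarith⟩
  calc volume {y : ℝ | a < |y| ∧ |y| ≤ b}
      ≤ volume (Set.Ioc a b) + volume (Set.Ico (-b) (-a)) :=
        (measure_mono hsub).trans (measure_union_le _ _)
    _ = 2 * ENNReal.ofReal (b - a) := by
        rw [Real.volume_Ioc, Real.volume_Ico, neg_sub_neg, two_mul]

def shell (k : ℕ) : Set ℝ := {y : ℝ | 2 ^ k < |y| ∧ |y| ≤ 2 ^ k + 1}

noncomputable def shellTerm (k : ℕ) : ℝ → ℝ := (shell k).indicator fun _ => (2 : ℝ) ^ k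

theorem paperF_eq_sign_mul_tsum (x : ℝ) :
    paperF x = Real.sign x * ∑' k, shellTerm k x := rfl

theorem measurableSet_shell (k : ℕ) : MeasurableSet (shell k) :=
  (measurableSet_lt measurable_const measurable_abs).inter
    (measurableSet_le measurable_abs measurable_const)

theorem volume_shell_le (k : ℕ) : volume (shell k) ≤ 2 := by
  simpa [shell] using volume_abs_mem_Ioc_le ((2 : ℝ) ^ k) (2 ^ k + 1)

theorem neg_shell (k : ℕ) : -shell k = shell k := by
  ext y
  simp only [shell, Set.mem_neg, Set.mem_ofPred_eq, abs_neg]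

theorem shellTerm_nonneg (k : ℕ) (x : ℝ) : 0 ≤ shellTerm k x :=
  Set.indicator_nonneg (fun _ _ => by positivity) x

theorem shellTerm_even (k : ℕ) : (shellTerm k).Even :=
  (Function.Even.const _).indicator (neg_shell k)

theorem integrable_shellTerm (k : ℕ) : Integrable (shellTerm k) :=
  (integrable_indicator_iff (measurableSet_shell k)).2 <| integrableOn_const <|
    ne_top_of_le_ne_top ENNReal.ofNat_ne_top (volume_shell_le k)

theorem integral_shellTerm_le (k : ℕ) : ∫ x, shellTerm k x ≤ 2 * 2 ^ k := by
  rw [shellTerm, integral_indicator_const _ (measurableSet_shell k), smul_eq_mul]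
  gcongr
  simpa [measureReal_def] using ENNReal.toReal_mono ENNReal.ofNat_ne_top (volume_shell_le k)

theorem shellTerm_eq_zero_of_abs_le {k K : ℕ} {x : ℝ} (hKk : K ≤ k) (hx : |x| ≤ 2 ^ K) :
    shellTerm k x = 0 := by
  refine Set.indicator_of_notMem (fun hmem => ?_) _
  have : (2 : ℝ) ^ K ≤ 2 ^ k := pow_le_pow_right₀ one_le_two hKk
  exact absurd hmem.1 (by linarith)

theorem paperF_odd : paperF.Odd := by
  have hsign : Function.Odd Real.sign := fun _ => Real.sign_neg
  have hsum : Function.Even fun x => ∑' k, shellTerm k x := fun x => by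
    simp only [(shellTerm_even _).eq]
  exact hsign.mul_even hsum

theorem abs_paperF_le_sum_range {K : ℕ} {x : ℝ} (hx : |x| ≤ 2 ^ K) :
    |paperF x| ≤ ∑ k ∈ range K, shellTerm k x := by
  have htsum : ∑' k, shellTerm k x = ∑ k ∈ range K, shellTerm k x :=
    tsum_eq_sum fun k hk => shellTerm_eq_zero_of_abs_le (by simpa using hk) hx
  have hsign : |Real.sign x| ≤ 1 := by
    rcases Real.sign_apply_eq x with h | h | h <;> simp [h]
  rw [paperF_eq_sign_mul_tsum, htsum, abs_mul,
    abs_of_nonneg (sum_nonneg fun k _ => shellTerm_nonneg k x)]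
  exact mul_le_of_le_one_left (sum_nonneg fun k _ => shellTerm_nonneg k x) hsign

theorem exists_pow_two_bracket {r : ℝ} (hr : 0 < r) :
    ∃ K : ℕ, r ≤ 2 ^ K ∧ (2 : ℝ) ^ K - 1 ≤ 2 * r := by
  rcases le_or_gt r 1 with hr1 | hr1
  · exact ⟨0, by simpa using hr1, by norm_num; linarith⟩
  · obtain ⟨n, hn, hn'⟩ := exists_nat_pow_near hr1.le one_lt_two
    exact ⟨n + 1, hn'.le, by rw [pow_succ]; linarith⟩

theorem integral_ball_abs_paperF_le {r : ℝ} (hr : 0 < r) :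
    ∫ x in ball (0 : ℝ) r, |paperF x| ≤ 2 * (volume (ball (0 : ℝ) r)).toReal := by
  obtain ⟨K, hrK, hK⟩ := exists_pow_two_bracket hr
  have hint : Integrable fun x => ∑ k ∈ range K, shellTerm k x :=
    integrable_finsetSum _ fun k _ => integrable_shellTerm k
  have hsum_nonneg : ∀ x, 0 ≤ ∑ k ∈ range K, shellTerm k x :=
    fun x => sum_nonneg fun k _ => shellTerm_nonneg k x
  have hbound : ∀ x ∈ ball (0 : ℝ) r, |paperF x| ≤ ∑ k ∈ range K, shellTerm k x := by
    intro x hx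
    rw [mem_ball_zero_iff, Real.norm_eq_abs] at hx
    exact abs_paperF_le_sum_range (hx.le.trans hrK)
  calc ∫ x in ball (0 : ℝ) r, |paperF x|
      ≤ ∫ x in ball (0 : ℝ) r, ∑ k ∈ range K, shellTerm k x :=
        integral_mono_of_nonneg (.of_forall fun _ => abs_nonneg _) hint.integrableOn
          (ae_restrict_of_forall_mem measurableSet_ball hbound)
    _ ≤ ∫ x, ∑ k ∈ range K, shellTerm k x :=
        setIntegral_le_integral hint (.of_forall hsum_nonneg)
    _ = ∑ k ∈ range K, ∫ x, shellTerm k x :=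
        integral_finsetSum _ fun k _ => integrable_shellTerm k
    _ ≤ ∑ k ∈ range K, 2 * (2 : ℝ) ^ k := sum_le_sum fun k _ => integral_shellTerm_le k
    _ = 2 * (2 ^ K - 1) := by rw [← mul_sum, geom_sum_eq (by norm_num)]; norm_num
    _ ≤ 2 * (volume (ball (0 : ℝ) r)).toReal := by
        rw [Real.volume_ball, ENNReal.toReal_ofReal (by positivity)]
        linarith

/-- `paperF` has average `0` over every ball `B(0,r)` and its central
`L¹` mean oscillations are uniformly bounded, i.e. `paperF ∈ CBMO¹(ℝ)`. -/
theorem paperF_mem_central_bmo_one :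
    (∀ r : ℝ, 0 < r → (⨍ x in ball (0 : ℝ) r, paperF x) = 0) ∧
    ∃ C : ℝ, ∀ r : ℝ, 0 < r →
      ∫ x in ball (0 : ℝ) r, |paperF x - ⨍ y in ball (0 : ℝ) r, paperF y| ≤
        C * (volume (ball (0 : ℝ) r)).toReal := by
  have haverage (r : ℝ) : (⨍ x in ball (0 : ℝ) r, paperF x) = 0 := by
    rw [setAverage_eq, paperF_odd.setIntegral_eq_zero measurableSet_ball (by simp), smul_zero]
  refine ⟨fun r _ => haverage r, 2, fun r hr => ?_⟩
  simpa only [haverage, sub_zero] using integral_ball_abs_paperF_le hr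
end

section
/- Let 1 < p < ∞ and suppose b is locally integrable on ℝⁿ such that both commutators [b,H] and [b,H*] are bounded on L^p(ℝⁿ) with operator norm at most A. Then for every ball B = B(0,r) centered at the origin, (|B|^{-1} ∫_B |b(x) − b_B|^p dx)^{1/p} ≤ C·A, i.e., b ∈ CBMO^p(ℝⁿ). -/
/-!
Test the two commutators on `χ_B` and on `f₀(y) = |y|ⁿ |B|⁻¹ χ_B(y)`, `B = B(0, r)`. For
`0 < |x| < r` both are explicit: with `v = |B(0, 1)|`, `[b, H] χ_B (x) = v b(x) - Hb(x)` and
`[b, H*] f₀ (x) = |B|⁻¹ (b(x) (|B| - v |x|ⁿ) - ∫_B b + |x|ⁿ Hb(x))`, so that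
`b(x) - b_B = |x|ⁿ |B|⁻¹ [b, H] χ_B (x) + [b, H*] f₀ (x)` with `|x|ⁿ |B|⁻¹ ≤ v⁻¹`.
Minkowski's inequality, the assumed bounds, `‖χ_B‖_p = |B|^{1/p}` and
`‖f₀‖_p ≤ v⁻¹ |B|^{1/p}` then give `‖b - b_B‖_{L^p(B)} ≤ 2 v⁻¹ A |B|^{1/p}`.
-/

open MeasureTheory Metric
open scoped ENNReal

abbrev En (n : ℕ) := EuclideanSpace ℝ (Fin n)

/-- The `n`-dimensional Hardy operator `Hf(x) = |x|^{-n} ∫_{|y| ≤ |x|} f(y) dy`. -/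
noncomputable def hardyOp (n : ℕ) (f : En n → ℝ) : En n → ℝ := fun x =>
  ‖x‖ ^ (-(n : ℝ)) * ∫ y in closedBall (0 : En n) ‖x‖, f y

/-- The dual Hardy operator `H*f(x) = ∫_{|y| > |x|} f(y)/|y|^n dy`. -/
noncomputable def dualHardyOp (n : ℕ) (f : En n → ℝ) : En n → ℝ := fun x =>
  ∫ y in {y : En n | ‖x‖ < ‖y‖}, f y / ‖y‖ ^ n

def mulCommutator {α : Type*} (T : (α → ℝ) → α → ℝ) (b f : α → ℝ) (x : α) : ℝ :=
  b x * T f x - T (fun y => b y * f y) x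

section Measure

variable {α β E F G : Type*} [MeasurableSpace α] [MeasurableSpace β] {μ : Measure α}

theorem MeasureTheory.AEStronglyMeasurable.setIntegral_prodMk_preimage
    [NormedAddCommGroup E] [NormedSpace ℝ E] {ν : Measure β} [SFinite ν]
    {s : Set (α × β)} (hs : MeasurableSet s) {f : β → E} (hf : AEStronglyMeasurable f ν) :
    AEStronglyMeasurable (fun x => ∫ y in Prod.mk x ⁻¹' s, f y ∂ν) μ := by
  refine ((hf.comp_snd (μ := μ)).indicator hs).integral_prod_right'.congr
    (ae_of_all _ fun x => ?_)
  dsimp only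
  rw [← integral_indicator (measurable_prodMk_left hs)]
  rfl

theorem MeasureTheory.AEStronglyMeasurable.mulCommutator {T : (α → ℝ) → α → ℝ}
    (hT : ∀ g, AEStronglyMeasurable g μ → AEStronglyMeasurable (T g) μ) {b f : α → ℝ}
    (hb : AEStronglyMeasurable b μ) (hf : AEStronglyMeasurable f μ) :
    AEStronglyMeasurable (mulCommutator T b f) μ :=
  (hb.mul (hT f hf)).sub (hT _ (hb.mul hf))

theorem aestronglyMeasurable_of_forall_integrableOn_ball [PseudoMetricSpace α]
    [NormedAddCommGroup E] {f : α → E} (x : α)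
    (hf : ∀ r, 0 < r → IntegrableOn f (ball x r) μ) :
    AEStronglyMeasurable f μ := by
  rw [← Measure.restrict_univ (μ := μ), ← iUnion_ball_nat_succ x]
  exact aestronglyMeasurable_iUnion_iff.2 fun k => (hf (k + 1) k.cast_add_one_pos).1

theorem eLpNorm_le_of_norm_le_mul_add [NormedAddCommGroup E] [NormedAddCommGroup F]
    [NormedAddCommGroup G] {p : ℝ≥0∞} (hp : 1 ≤ p) {u : α → E} {g : α → F} {h : α → G} {c : ℝ}
    (hg : AEStronglyMeasurable g μ) (hh : AEStronglyMeasurable h μ)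
    (hu : ∀ᵐ x ∂μ, ‖u x‖ ≤ c * ‖g x‖ + ‖h x‖) :
    eLpNorm u p μ ≤ ‖c‖ₑ * eLpNorm g p μ + eLpNorm h p μ :=
  calc eLpNorm u p μ ≤ eLpNorm (c • fun x => ‖g x‖) p μ + eLpNorm (fun x => ‖h x‖) p μ :=
        (eLpNorm_mono_ae_real hu).trans
          (eLpNorm_add_le (hg.norm.const_smul c) hh.norm hp)
    _ = ‖c‖ₑ * eLpNorm g p μ + eLpNorm h p μ := by
        rw [eLpNorm_const_smul, eLpNorm_norm, eLpNorm_norm]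

theorem setLIntegral_ofReal_abs_rpow_le {p : ℝ} (hp : 0 < p) {u : α → ℝ} {s : Set α} {K : ℝ}
    (hK : 0 ≤ K)
    (hu : eLpNorm u (ENNReal.ofReal p) (μ.restrict s) ≤ ENNReal.ofReal K * μ s ^ (1 / p)) :
    ∫⁻ x in s, ENNReal.ofReal (|u x| ^ p) ∂μ ≤ ENNReal.ofReal (K ^ p) * μ s := by
  have hq : ENNReal.ofReal p ≠ 0 := ENNReal.ofReal_ne_zero_iff.2 hp
  calc ∫⁻ x in s, ENNReal.ofReal (|u x| ^ p) ∂μ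
      = eLpNorm u (ENNReal.ofReal p) (μ.restrict s) ^ p := by
        rw [eLpNorm_eq_eLpNorm' hq ENNReal.ofReal_ne_top, ENNReal.toReal_ofReal hp.le,
          ← lintegral_rpow_enorm_eq_rpow_eLpNorm' hp]
        simp_rw [Real.enorm_eq_ofReal_abs, ENNReal.ofReal_rpow_of_nonneg (abs_nonneg _) hp.le]
    _ ≤ (ENNReal.ofReal K * μ s ^ (1 / p)) ^ p := by gcongr
    _ = ENNReal.ofReal (K ^ p) * μ s := by
        rw [ENNReal.mul_rpow_of_nonneg _ _ hp.le, ← ENNReal.rpow_mul,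
          one_div_mul_cancel hp.ne', ENNReal.rpow_one, ENNReal.ofReal_rpow_of_nonneg hK hp.le]

end Measure

section Hardy

variable {n : ℕ}

theorem volume_real_closedBall_zero {t : ℝ} (ht : 0 ≤ t) :
    volume.real (closedBall (0 : En n) t) = t ^ n * volume.real (ball (0 : En n) 1) := by
  rw [Measure.addHaar_real_closedBall _ _ ht, finrank_euclideanSpace_fin]

theorem volume_real_ball_zero {r : ℝ} (hr : 0 < r) :
    volume.real (ball (0 : En n) r) = r ^ n * volume.real (ball (0 : En n) 1) := by
  rw [measureReal_def, Measure.addHaar_ball_of_pos _ _ hr, finrank_euclideanSpace_fin,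
    ENNReal.toReal_mul, ENNReal.toReal_ofReal (by positivity), measureReal_def]

theorem volume_real_ball_pos {r : ℝ} (hr : 0 < r) : 0 < volume.real (ball (0 : En n) r) :=
  ENNReal.toReal_pos (measure_ball_pos _ _ hr).ne' measure_ball_lt_top.ne

theorem norm_pow_div_volume_real_ball_le {r : ℝ} {x : En n} (hx : x ∈ ball (0 : En n) r) :
    ‖x‖ ^ n / volume.real (ball (0 : En n) r) ≤ (volume.real (ball (0 : En n) 1))⁻¹ := by
  have hxr : ‖x‖ < r := mem_ball_zero_iff.1 hx
  have hr : 0 < r := (norm_nonneg x).trans_lt hxr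
  have hv := volume_real_ball_pos (n := n) one_pos
  rw [volume_real_ball_zero hr, div_le_iff₀ (by positivity), mul_comm (r ^ n),
    inv_mul_cancel_left₀ hv.ne']
  exact pow_le_pow_left₀ (norm_nonneg x) hxr.le n

theorem aestronglyMeasurable_hardyOp {f : En n → ℝ} (hf : AEStronglyMeasurable f) :
    AEStronglyMeasurable (hardyOp n f) := by
  have hs : MeasurableSet {q : En n × En n | ‖q.2‖ ≤ ‖q.1‖} :=
    measurableSet_le measurable_snd.norm measurable_fst.norm
  have hsection : ∀ x : En n,
      Prod.mk x ⁻¹' {q : En n × En n | ‖q.2‖ ≤ ‖q.1‖} = closedBall 0 ‖x‖ := fun x => by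
    ext; simp
  have h := hf.setIntegral_prodMk_preimage hs (μ := volume)
  simp only [hsection] at h
  exact (measurable_norm.pow_const (-(n : ℝ))).aestronglyMeasurable.mul h

theorem aestronglyMeasurable_dualHardyOp {f : En n → ℝ} (hf : AEStronglyMeasurable f) :
    AEStronglyMeasurable (dualHardyOp n f) :=
  (hf.div₀ (measurable_norm.pow_const n).aestronglyMeasurable).setIntegral_prodMk_preimage
    (measurableSet_lt measurable_fst.norm measurable_snd.norm)

theorem integral_closedBall_eq_norm_pow_mul_hardyOp {x : En n} (hx : x ≠ 0) (f : En n → ℝ) :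
    ∫ y in closedBall (0 : En n) ‖x‖, f y = ‖x‖ ^ n * hardyOp n f x := by
  rw [hardyOp, Real.rpow_neg (norm_nonneg x), Real.rpow_natCast,
    mul_inv_cancel_left₀ (pow_ne_zero n (norm_ne_zero_iff.2 hx))]

theorem hardyOp_one {x : En n} (hx : x ≠ 0) :
    hardyOp n (fun _ => 1) x = volume.real (ball (0 : En n) 1) := by
  have h := integral_closedBall_eq_norm_pow_mul_hardyOp hx fun _ => 1
  rw [setIntegral_const, smul_eq_mul, mul_one, volume_real_closedBall_zero (norm_nonneg x)] at h
  exact (mul_left_cancel₀ (pow_ne_zero n (norm_ne_zero_iff.2 hx)) h).symm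

theorem hardyOp_indicator_of_closedBall_subset {s : Set (En n)} {f : En n → ℝ} {x : En n}
    (hs : closedBall 0 ‖x‖ ⊆ s) : hardyOp n (s.indicator f) x = hardyOp n f x := by
  rw [hardyOp, hardyOp, setIntegral_congr_fun measurableSet_closedBall
    fun _ hy => Set.indicator_of_mem (hs hy) f]

theorem dualHardyOp_mul_norm_pow (g : En n → ℝ) (x : En n) :
    dualHardyOp n (fun y => g y * ‖y‖ ^ n) x = ∫ y in {y : En n | ‖x‖ < ‖y‖}, g y :=
  setIntegral_congr_fun (measurableSet_lt measurable_const measurable_norm) fun _ hy =>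
    mul_div_cancel_right₀ _ (pow_ne_zero n ((norm_nonneg x).trans_lt hy).ne')

theorem setIntegral_norm_lt_indicator_ball {r : ℝ} {g : En n → ℝ}
    (hg : IntegrableOn g (ball 0 r)) {x : En n} (hx : ‖x‖ < r) :
    ∫ y in {y : En n | ‖x‖ < ‖y‖}, (ball 0 r).indicator g y =
      (∫ y in ball (0 : En n) r, g y) - ∫ y in closedBall (0 : En n) ‖x‖, g y := by
  have hset : ball (0 : En n) r \ closedBall 0 ‖x‖ = {y | ‖x‖ < ‖y‖} ∩ ball 0 r := by
    ext y; simp [and_comm]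
  rw [setIntegral_indicator measurableSet_ball, ← hset,
    setIntegral_sdiff measurableSet_closedBall hg (closedBall_subset_ball hx)]

theorem ae_ne_zero_of_pos (hn : 0 < n) : ∀ᵐ x : En n, x ≠ 0 := by
  have : Nonempty (Fin n) := ⟨⟨0, hn⟩⟩
  exact measure_eq_zero_iff_ae_notMem.1 (measure_singleton 0)

noncomputable def dualTestFunction (n : ℕ) (r : ℝ) (y : En n) : ℝ :=
  (ball (0 : En n) r).indicator (fun _ => (volume.real (ball (0 : En n) r))⁻¹) y * ‖y‖ ^ n

theorem abs_dualTestFunction_le (r : ℝ) (y : En n) :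
    |dualTestFunction n r y| ≤
      (ball (0 : En n) r).indicator (fun _ => (volume.real (ball (0 : En n) 1))⁻¹) y := by
  by_cases hy : y ∈ ball (0 : En n) r
  · rw [dualTestFunction, Set.indicator_of_mem hy, Set.indicator_of_mem hy, abs_of_nonneg
      (by positivity), inv_mul_eq_div]
    exact norm_pow_div_volume_real_ball_le hy
  · simp [dualTestFunction, Set.indicator_of_notMem hy]

theorem measurable_dualTestFunction (r : ℝ) : Measurable (dualTestFunction n r) :=
  (measurable_const.indicator measurableSet_ball).mul (measurable_norm.pow_const n)

theorem memLp_dualTestFunction (p : ℝ≥0∞) (r : ℝ) : MemLp (dualTestFunction n r) p :=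
  (memLp_indicator_const p measurableSet_ball _ (Or.inr measure_ball_lt_top.ne)).of_le
    (measurable_dualTestFunction r).aestronglyMeasurable
    (ae_of_all _ fun y => (abs_dualTestFunction_le r y).trans (Real.le_norm_self _))

theorem eLpNorm_dualTestFunction_le {p : ℝ≥0∞} (hp : p ≠ 0) {r : ℝ} (hr : 0 < r) :
    eLpNorm (dualTestFunction n r) p ≤
      ‖(volume.real (ball (0 : En n) 1))⁻¹‖ₑ * volume (ball (0 : En n) r) ^ (1 / p.toReal) := by
  rw [← eLpNorm_indicator_const' measurableSet_ball (measure_ball_pos _ _ hr).ne' hp]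
  exact eLpNorm_mono_ae_real (ae_of_all _ (abs_dualTestFunction_le r))

theorem mulCommutator_hardyOp_indicator_ball {b : En n → ℝ} {r : ℝ} {x : En n}
    (hx : x ∈ ball (0 : En n) r) (hx0 : x ≠ 0) :
    mulCommutator (hardyOp n) b ((ball 0 r).indicator fun _ => 1) x =
      b x * volume.real (ball (0 : En n) 1) - hardyOp n b x := by
  have hsub : closedBall (0 : En n) ‖x‖ ⊆ ball 0 r :=
    closedBall_subset_ball (mem_ball_zero_iff.1 hx)
  have hbχ : (fun y => b y * (ball 0 r).indicator (fun _ => (1 : ℝ)) y) =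
      (ball 0 r).indicator b := by
    ext y
    by_cases hy : y ∈ ball (0 : En n) r <;> simp [hy]
  rw [mulCommutator, hbχ, hardyOp_indicator_of_closedBall_subset hsub,
    hardyOp_indicator_of_closedBall_subset hsub, hardyOp_one hx0]

theorem mulCommutator_dualHardyOp_dualTestFunction {b : En n → ℝ} {r : ℝ}
    (hb : IntegrableOn b (ball 0 r)) {x : En n} (hx : x ∈ ball (0 : En n) r) (hx0 : x ≠ 0) :
    mulCommutator (dualHardyOp n) b (dualTestFunction n r) x =
      (volume.real (ball (0 : En n) r))⁻¹ *
        (b x * (volume.real (ball (0 : En n) r) - ‖x‖ ^ n * volume.real (ball (0 : En n) 1)) -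
          ((∫ y in ball (0 : En n) r, b y) - ‖x‖ ^ n * hardyOp n b x)) := by
  set β := volume.real (ball (0 : En n) r)
  have hxr : ‖x‖ < r := mem_ball_zero_iff.1 hx
  have hbf : (fun y => b y * dualTestFunction n r y) =
      fun y => (ball 0 r).indicator (fun y => b y * β⁻¹) y * ‖y‖ ^ n := by
    ext y
    by_cases hy : y ∈ ball (0 : En n) r
    · simp only [dualTestFunction, Set.indicator_of_mem hy]; ring
    · simp [dualTestFunction, hy]
  have hf : dualTestFunction n r =
      fun y => (ball 0 r).indicator (fun _ => β⁻¹) y * ‖y‖ ^ n := rfl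
  rw [mulCommutator, hbf, hf, dualHardyOp_mul_norm_pow, dualHardyOp_mul_norm_pow,
    setIntegral_norm_lt_indicator_ball (integrableOn_const measure_ball_lt_top.ne) hxr,
    setIntegral_norm_lt_indicator_ball (hb.mul_const _) hxr, setIntegral_const,
    setIntegral_const, integral_mul_const, integral_mul_const,
    integral_closedBall_eq_norm_pow_mul_hardyOp hx0, volume_real_closedBall_zero (norm_nonneg x)]
  simp only [smul_eq_mul]
  ring

theorem sub_setAverage_ball_eq {b : En n → ℝ} {r : ℝ} (hb : IntegrableOn b (ball 0 r))
    {x : En n} (hx : x ∈ ball (0 : En n) r) (hx0 : x ≠ 0) :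
    b x - ⨍ y in ball (0 : En n) r, b y =
      ‖x‖ ^ n / volume.real (ball (0 : En n) r) *
          mulCommutator (hardyOp n) b ((ball 0 r).indicator fun _ => 1) x +
        mulCommutator (dualHardyOp n) b (dualTestFunction n r) x := by
  have hβ : volume.real (ball (0 : En n) r) ≠ 0 :=
    (volume_real_ball_pos ((norm_nonneg x).trans_lt (mem_ball_zero_iff.1 hx))).ne'
  rw [setAverage_eq, smul_eq_mul, mulCommutator_hardyOp_indicator_ball hx hx0,
    mulCommutator_dualHardyOp_dualTestFunction hb hx hx0]
  field_simp
  ring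

theorem abs_sub_setAverage_ball_le {b : En n → ℝ} {r : ℝ} (hb : IntegrableOn b (ball 0 r))
    {x : En n} (hx : x ∈ ball (0 : En n) r) (hx0 : x ≠ 0) :
    |b x - ⨍ y in ball (0 : En n) r, b y| ≤
      (volume.real (ball (0 : En n) 1))⁻¹ *
          |mulCommutator (hardyOp n) b ((ball 0 r).indicator fun _ => 1) x| +
        |mulCommutator (dualHardyOp n) b (dualTestFunction n r) x| := by
  rw [sub_setAverage_ball_eq hb hx hx0]
  refine (abs_add_le _ _).trans ?_
  rw [abs_mul, abs_of_nonneg (by positivity)]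
  gcongr
  exact norm_pow_div_volume_real_ball_le hx

theorem eLpNorm_sub_setAverage_ball_le (hn : 0 < n) {q : ℝ≥0∞} (hq : 1 ≤ q) {b : En n → ℝ}
    (hbm : AEStronglyMeasurable b) {r : ℝ} (hr : 0 < r) (hb : IntegrableOn b (ball 0 r)) {A : ℝ}
    (hH : eLpNorm (mulCommutator (hardyOp n) b ((ball 0 r).indicator fun _ => 1)) q ≤
      ENNReal.ofReal A * eLpNorm ((ball (0 : En n) r).indicator fun _ => (1 : ℝ)) q)
    (hH' : eLpNorm (mulCommutator (dualHardyOp n) b (dualTestFunction n r)) q ≤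
      ENNReal.ofReal A * eLpNorm (dualTestFunction n r) q) :
    eLpNorm (fun x => b x - ⨍ y in ball (0 : En n) r, b y) q (volume.restrict (ball 0 r)) ≤
      ENNReal.ofReal (2 / volume.real (ball (0 : En n) 1) * A) *
        volume (ball (0 : En n) r) ^ (1 / q.toReal) := by
  set v := volume.real (ball (0 : En n) 1)
  set B := ball (0 : En n) r
  have hv : 0 < v := volume_real_ball_pos one_pos
  have hq0 : q ≠ 0 := (zero_lt_one.trans_le hq).ne'
  have hχ : AEStronglyMeasurable (B.indicator fun _ => (1 : ℝ)) :=
    (stronglyMeasurable_const.indicator measurableSet_ball).aestronglyMeasurable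
  have hχnorm : eLpNorm (B.indicator fun _ => (1 : ℝ)) q = volume B ^ (1 / q.toReal) := by
    rw [eLpNorm_indicator_const' measurableSet_ball (measure_ball_pos _ _ hr).ne' hq0, enorm_one,
      one_mul]
  have hbound : ∀ᵐ x ∂volume.restrict B, ‖b x - ⨍ y in B, b y‖ ≤
      v⁻¹ * ‖mulCommutator (hardyOp n) b (B.indicator fun _ => 1) x‖ +
        ‖mulCommutator (dualHardyOp n) b (dualTestFunction n r) x‖ := by
    filter_upwards [ae_restrict_mem measurableSet_ball,
      ae_restrict_of_ae (ae_ne_zero_of_pos hn)] with x hx hx0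
    exact abs_sub_setAverage_ball_le hb hx hx0
  calc eLpNorm (fun x => b x - ⨍ y in B, b y) q (volume.restrict B)
      ≤ ‖v⁻¹‖ₑ * eLpNorm (mulCommutator (hardyOp n) b (B.indicator fun _ => 1)) q
          (volume.restrict B) +
        eLpNorm (mulCommutator (dualHardyOp n) b (dualTestFunction n r)) q (volume.restrict B) :=
        eLpNorm_le_of_norm_le_mul_add hq
          (hbm.mulCommutator (fun _ => aestronglyMeasurable_hardyOp) hχ).restrict
          (hbm.mulCommutator (fun _ => aestronglyMeasurable_dualHardyOp)
            (measurable_dualTestFunction r).aestronglyMeasurable).restrict hbound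
    _ ≤ ‖v⁻¹‖ₑ * (ENNReal.ofReal A * volume B ^ (1 / q.toReal)) +
          ENNReal.ofReal A * (‖v⁻¹‖ₑ * volume B ^ (1 / q.toReal)) := by
        gcongr
        · exact (eLpNorm_restrict_le _ _ _ _).trans (hχnorm ▸ hH)
        · exact (eLpNorm_restrict_le _ _ _ _).trans
            (hH'.trans (by gcongr; exact eLpNorm_dualTestFunction_le hq0 hr))
    _ = ENNReal.ofReal (2 / v * A) * volume B ^ (1 / q.toReal) := by
        rw [show 2 / v * A = 2 * (v⁻¹ * A) by ring, ENNReal.ofReal_mul zero_le_two,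
          ENNReal.ofReal_mul (inv_nonneg.2 hv.le), ENNReal.ofReal_ofNat,
          Real.enorm_eq_ofReal (inv_nonneg.2 hv.le)]
        ring

end Hardy

/-- If `1 < p < ∞` and both commutators `[b,H]` and `[b,H*]` are
bounded on `L^p(ℝⁿ)` with operator norm at most `A`, then for every ball `B = B(0,r)`
one has `(|B|⁻¹ ∫_B |b − b_B|^p)^{1/p} ≤ C·A`, i.e. `b ∈ CBMO^p(ℝⁿ)`. -/
theorem commutator_bounded_implies_central_bmo (n : ℕ) (hn : 0 < n) (p : ℝ) (hp : 1 < p) :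
    ∃ C : ℝ, 0 < C ∧
      ∀ (b : En n → ℝ) (A : ℝ), 0 ≤ A →
        (∀ r : ℝ, 0 < r → IntegrableOn b (ball (0 : En n) r) volume) →
        (∀ f : En n → ℝ, MemLp f (ENNReal.ofReal p) volume →
          eLpNorm (fun x => b x * hardyOp n f x - hardyOp n (fun y => b y * f y) x)
              (ENNReal.ofReal p) volume ≤
            ENNReal.ofReal A * eLpNorm f (ENNReal.ofReal p) volume) →
        (∀ f : En n → ℝ, MemLp f (ENNReal.ofReal p) volume →
          eLpNorm (fun x => b x * dualHardyOp n f x - dualHardyOp n (fun y => b y * f y) x)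
              (ENNReal.ofReal p) volume ≤
            ENNReal.ofReal A * eLpNorm f (ENNReal.ofReal p) volume) →
        ∀ r : ℝ, 0 < r →
          ∫⁻ x in ball (0 : En n) r,
              ENNReal.ofReal (|b x - ⨍ y in ball (0 : En n) r, b y| ^ p) ≤
            ENNReal.ofReal ((C * A) ^ p) * volume (ball (0 : En n) r) := by
  have hp0 : 0 < p := zero_lt_one.trans hp
  refine ⟨2 / volume.real (ball (0 : En n) 1),
    div_pos two_pos (volume_real_ball_pos one_pos), ?_⟩
  intro b A hA hloc hH hH' r hr
  have hbm : AEStronglyMeasurable b := aestronglyMeasurable_of_forall_integrableOn_ball 0 hloc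
  have hχ : MemLp ((ball (0 : En n) r).indicator fun _ => (1 : ℝ)) (ENNReal.ofReal p) :=
    memLp_indicator_const _ measurableSet_ball 1 (Or.inr measure_ball_lt_top.ne)
  have h := eLpNorm_sub_setAverage_ball_le hn (ENNReal.one_le_ofReal.2 hp.le) hbm hr (hloc r hr)
    (hH _ hχ) (hH' _ (memLp_dualTestFunction _ r))
  rw [ENNReal.toReal_ofReal hp0.le] at h
  exact setLIntegral_ofReal_abs_rpow_le hp0 (by positivity) h
end

section
/- For every x in the ball B = B(0,r) ⊂ ℝⁿ and every locally integrable b, one has the pointwise bound |b(x) − b_B| ≤ C_n ( |[b,H](χ_B)(x)| + |[b,H*](f₀)(x)| ), where f₀(y) = |y|^n |B|^{-1} χ_B(y) and C_n depends only on n. -/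
open MeasureTheory Metric

/-! The average of `b x - b y` over `B` is `b x - b_B`. Splitting `B` at `‖y‖ = ‖x‖`, the inner
part is `‖x‖ⁿ [b,H](χ_B)(x)` and the outer part is `|B| [b,H*](f₀)(x)`, which gives the identity
`b x - b_B = |B|⁻¹ ‖x‖ⁿ [b,H](χ_B)(x) + [b,H*](f₀)(x)` for any `B` of finite positive measure.
For `B = B(0,r)` and `x ∈ B` the weight `|B|⁻¹ ‖x‖ⁿ` is at most `|B(0,1)|⁻¹`. -/

open Module

theorem norm_pow_mul_hardyOp {n : ℕ} (f : En n → ℝ) (x : En n) :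
    ‖x‖ ^ n * hardyOp n f x = ∫ y in closedBall (0 : En n) ‖x‖, f y := by
  rw [hardyOp, ← mul_assoc]
  rcases eq_or_ne x 0 with rfl | hx
  · -- For `n > 0` the junk value `0 ^ (-n : ℝ) = 0` is matched by `{0}` being null.
    rcases Nat.eq_zero_or_pos n with rfl | hn
    · simp
    · have hnull : volume (closedBall (0 : En n) ‖(0 : En n)‖) = 0 := by
        rw [norm_zero, Measure.addHaar_closedBall volume 0 le_rfl, finrank_euclideanSpace_fin]
        simp [hn.ne']
      rw [setIntegral_measure_zero _ hnull, mul_zero]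
  · rw [Real.rpow_neg (norm_nonneg x), Real.rpow_natCast, mul_inv_cancel₀ (by positivity),
      one_mul]

theorem dualHardyOp_norm_pow_mul {n : ℕ} (g : En n → ℝ) (x : En n) :
    dualHardyOp n (fun y => ‖y‖ ^ n * g y) x = ∫ y in (closedBall (0 : En n) ‖x‖)ᶜ, g y := by
  have hset : {y : En n | ‖x‖ < ‖y‖} = (closedBall 0 ‖x‖)ᶜ := by ext; simp
  rw [dualHardyOp, hset]
  refine setIntegral_congr_fun measurableSet_closedBall.compl fun y hy => ?_
  have : ‖y‖ ≠ 0 := ((norm_nonneg x).trans_lt (by simpa using hy)).ne'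
  field_simp

theorem const_mul_setIntegral_indicator_sub {α : Type*} [MeasurableSpace α] {μ : Measure α}
    {s : Set α} (hs : MeasurableSet s) (hs_fin : μ s ≠ ⊤) {b : α → ℝ} (hb : IntegrableOn b s μ)
    (c : ℝ) (t : Set α) :
    c * ∫ y in t, s.indicator (fun _ => (1 : ℝ)) y ∂μ -
        ∫ y in t, b y * s.indicator (fun _ => 1) y ∂μ =
      ∫ y in t, s.indicator (fun y => c - b y) y ∂μ := by
  have hone : Integrable (s.indicator fun _ => (1 : ℝ)) μ :=
    (integrableOn_const hs_fin).integrable_indicator hs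
  have hmul : (fun y => b y * s.indicator (fun _ => (1 : ℝ)) y) = s.indicator b := by
    ext y; by_cases hy : y ∈ s <;> simp [hy]
  rw [hmul, ← integral_const_mul, ← integral_sub (hone.const_mul c).integrableOn
    (hb.integrable_indicator hs).integrableOn]
  congr 1 with y
  by_cases hy : y ∈ s <;> simp [hy]

theorem norm_pow_mul_commutator_hardyOp_indicator {n : ℕ} {s : Set (En n)} (hs : MeasurableSet s)
    (hs_fin : volume s ≠ ⊤) {b : En n → ℝ} (hb : IntegrableOn b s) (x : En n) :
    ‖x‖ ^ n * (b x * hardyOp n (s.indicator fun _ => 1) x -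
        hardyOp n (fun y => b y * s.indicator (fun _ => 1) y) x) =
      ∫ y in closedBall (0 : En n) ‖x‖, s.indicator (fun y => b x - b y) y := by
  rw [mul_sub, mul_left_comm, norm_pow_mul_hardyOp, norm_pow_mul_hardyOp,
    const_mul_setIntegral_indicator_sub hs hs_fin hb]

theorem commutator_dualHardyOp_indicator {n : ℕ} {s : Set (En n)} (hs : MeasurableSet s)
    (hs_fin : volume s ≠ ⊤) {b : En n → ℝ} (hb : IntegrableOn b s) (a : ℝ) (x : En n) :
    b x * dualHardyOp n (s.indicator fun y => ‖y‖ ^ n / a) x -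
        dualHardyOp n (fun y => b y * s.indicator (fun y => ‖y‖ ^ n / a) y) x =
      a⁻¹ * ∫ y in (closedBall (0 : En n) ‖x‖)ᶜ, s.indicator (fun y => b x - b y) y := by
  have hf₀ : (s.indicator fun y => ‖y‖ ^ n / a) =
      fun y => ‖y‖ ^ n * (a⁻¹ * s.indicator (fun _ => 1) y) := by
    ext y; by_cases hy : y ∈ s <;> simp [hy, div_eq_mul_inv]
  have hbf₀ : (fun y => b y * s.indicator (fun y => ‖y‖ ^ n / a) y) =
      fun y => ‖y‖ ^ n * (a⁻¹ * (b y * s.indicator (fun _ => 1) y)) := by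
    ext y; rw [hf₀]; ring
  rw [hbf₀, hf₀, dualHardyOp_norm_pow_mul, dualHardyOp_norm_pow_mul, integral_const_mul,
    integral_const_mul, ← const_mul_setIntegral_indicator_sub hs hs_fin hb]
  ring

theorem inv_mul_setIntegral_sub_eq_sub_setAverage {α : Type*} [MeasurableSpace α]
    {μ : Measure α} {s : Set α} (hs₀ : μ s ≠ 0) (hs_fin : μ s ≠ ⊤) {b : α → ℝ}
    (hb : IntegrableOn b s μ) (c : ℝ) :
    (μ s).toReal⁻¹ * ∫ y in s, (c - b y) ∂μ = c - ⨍ y in s, b y ∂μ := by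
  have : (μ s).toReal ≠ 0 := ENNReal.toReal_ne_zero.mpr ⟨hs₀, hs_fin⟩
  rw [integral_sub (integrableOn_const (C := c) hs_fin) hb, setIntegral_const, setAverage_eq,
    measureReal_def, smul_eq_mul, smul_eq_mul]
  field_simp

theorem sub_setAverage_eq_commutators {n : ℕ} {s : Set (En n)} (hs : MeasurableSet s)
    (hs₀ : volume s ≠ 0) (hs_fin : volume s ≠ ⊤) {b : En n → ℝ} (hb : IntegrableOn b s)
    (x : En n) :
    b x - ⨍ y in s, b y =
      (volume s).toReal⁻¹ * ‖x‖ ^ n *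
          (b x * hardyOp n (s.indicator fun _ => 1) x -
            hardyOp n (fun y => b y * s.indicator (fun _ => 1) y) x) +
        (b x * dualHardyOp n (s.indicator fun y => ‖y‖ ^ n / (volume s).toReal) x -
          dualHardyOp n (fun y =>
            b y * s.indicator (fun y => ‖y‖ ^ n / (volume s).toReal) y) x) := by
  have hint : Integrable (s.indicator fun y => b x - b y) :=
    ((integrableOn_const hs_fin).sub hb).integrable_indicator hs
  rw [mul_assoc, norm_pow_mul_commutator_hardyOp_indicator hs hs_fin hb,
    commutator_dualHardyOp_indicator hs hs_fin hb, ← mul_add,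
    integral_add_compl measurableSet_closedBall hint,
    integral_indicator hs, inv_mul_setIntegral_sub_eq_sub_setAverage hs₀ hs_fin hb]

theorem inv_measure_ball_mul_norm_pow_le {E : Type*} [NormedAddCommGroup E] [NormedSpace ℝ E]
    [MeasurableSpace E] [BorelSpace E] [FiniteDimensional ℝ E] (μ : Measure E)
    [μ.IsAddHaarMeasure] {r : ℝ} {x : E} (hx : x ∈ ball 0 r) :
    (μ (ball 0 r)).toReal⁻¹ * ‖x‖ ^ finrank ℝ E ≤ (μ (ball 0 1)).toReal⁻¹ := by
  have hxr : ‖x‖ < r := mem_ball_zero_iff.mp hx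
  have hr : 0 < r := (norm_nonneg x).trans_lt hxr
  rw [Measure.addHaar_ball_of_pos μ 0 hr, ENNReal.toReal_mul,
    ENNReal.toReal_ofReal (by positivity)]
  calc _ = ‖x‖ ^ finrank ℝ E / r ^ finrank ℝ E * (μ (ball (0 : E) 1)).toReal⁻¹ := by
        field_simp
    _ ≤ 1 * (μ (ball (0 : E) 1)).toReal⁻¹ := by
        gcongr
        exact div_le_one_of_le₀ (by gcongr) (by positivity)
    _ = _ := one_mul _

theorem pointwise_commutator_bound_general (n : ℕ) :
    ∃ C : ℝ, 0 < C ∧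
      ∀ (b : En n → ℝ) (r : ℝ), 0 < r →
        IntegrableOn b (ball (0 : En n) r) volume →
        ∀ x ∈ ball (0 : En n) r,
          |b x - ⨍ y in ball (0 : En n) r, b y| ≤
            C * (|b x * hardyOp n ((ball (0 : En n) r).indicator fun _ => (1 : ℝ)) x -
                    hardyOp n (fun y =>
                      b y * (ball (0 : En n) r).indicator (fun _ => (1 : ℝ)) y) x| +
                 |b x * dualHardyOp n ((ball (0 : En n) r).indicator fun y =>
                        ‖y‖ ^ n / (volume (ball (0 : En n) r)).toReal) x -
                    dualHardyOp n (fun y =>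
                      b y * (ball (0 : En n) r).indicator (fun y =>
                        ‖y‖ ^ n / (volume (ball (0 : En n) r)).toReal) y) x|) := by
  refine ⟨(volume (ball (0 : En n) 1)).toReal⁻¹ + 1, by positivity, fun b r hr hb x hx => ?_⟩
  have hweight := inv_measure_ball_mul_norm_pow_le volume hx
  rw [finrank_euclideanSpace_fin] at hweight
  have hw : 0 ≤ (volume (ball (0 : En n) r)).toReal⁻¹ * ‖x‖ ^ n := by positivity
  rw [sub_setAverage_eq_commutators measurableSet_ball (measure_ball_pos volume 0 hr).ne'
    measure_ball_lt_top.ne hb x]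
  generalize (volume (ball (0 : En n) r)).toReal⁻¹ * ‖x‖ ^ n = w at hw hweight ⊢
  generalize b x * hardyOp n _ x - _ = T
  generalize b x * dualHardyOp n _ x - _ = T'
  calc |w * T + T'| ≤ w * |T| + |T'| := by
        simpa [abs_mul, abs_of_nonneg hw] using abs_add_le (w * T) T'
    _ ≤ _ := by
        nlinarith [abs_nonneg T, abs_nonneg T', mul_le_mul_of_nonneg_right hweight (abs_nonneg T)]

/-- For every `x` in `B = B(0,r)` and locally integrable `b`,
`|b(x) − b_B| ≤ C_n (|[b,H](χ_B)(x)| + |[b,H*](f₀)(x)|)`, where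
`f₀(y) = |y|^n |B|⁻¹ χ_B(y)` and `[b,T]f = b·Tf − T(bf)`. -/
theorem pointwise_commutator_bound (n : ℕ) (hn : 0 < n) :
    ∃ C : ℝ, 0 < C ∧
      ∀ (b : En n → ℝ) (r : ℝ), 0 < r →
        IntegrableOn b (ball (0 : En n) r) volume →
        ∀ x ∈ ball (0 : En n) r,
          |b x - ⨍ y in ball (0 : En n) r, b y| ≤
            C * (|b x * hardyOp n ((ball (0 : En n) r).indicator fun _ => (1 : ℝ)) x -
                    hardyOp n (fun y =>
                      b y * (ball (0 : En n) r).indicator (fun _ => (1 : ℝ)) y) x| +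
                 |b x * dualHardyOp n ((ball (0 : En n) r).indicator fun y =>
                        ‖y‖ ^ n / (volume (ball (0 : En n) r)).toReal) x -
                    dualHardyOp n (fun y =>
                      b y * (ball (0 : En n) r).indicator (fun y =>
                        ‖y‖ ^ n / (volume (ball (0 : En n) r)).toReal) y) x|) :=
  pointwise_commutator_bound_general n
end
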